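/- Fix Λ ∈ ℕ, subclasses F_1,...,F_Λ ⊆ F, and (x,y) ∈ X × [0,1]. Set δ := |y − SOA(F_{1:Λ})(x)| and let λ be Λ+1 if δ ≤ α_Λ and otherwise the smallest index with δ > α_λ. Then at least one of the following holds: (i) δ ≤ α_Λ and cutoff(F_{1:Λ},x) = Λ; or (ii) there exists λ' with min{cutoff(F_{1:Λ},x)+1, λ} ≤ λ' ≤ min{cutoff(F_{1:Λ},x)+1, Λ} such that |SOA_{α_{λ'}}(F_{λ'})(x) − y| > α_{λ'} ≥ δ/16. -/

import Mathlib

/-!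
Write `c` for the cutoff, `δ = |y - g c|` and `λ = lamOf Λ δ`; since `δ ≤ 1`, minimality of `λ`
gives `δ ≤ 2·2^{-λ}`. If `c < λ`, then either `c = Λ` and `δ ≤ 2^{-Λ}`, or the jump
`|g c - g (c+1)| > 2·2^{-c}` at the cutoff is too large for both `g c` and `g (c+1)` to be close
to `y`, and `λ' = c + 1` works. If `λ ≤ c`, then `δ > 2^{-λ}`; below the cutoff the steps
`|g j - g (j+1)| ≤ 2·2^{-j}` telescope to `|g l - g c| ≤ 4·2^{-l}`, so `λ' = min c (λ + 3)`
is still far from `y` while `2^{-λ'} ≥ 2^{-λ}/8 ≥ δ/16`.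
-/

open Classical in
/-- The cutoff point of the hierarchical aggregation rule: the smallest `l` with
`1 ≤ l < Λ` and `|g l - g (l+1)| > 2·2^{-l}`, or `Λ` if no such `l` exists. -/
noncomputable def cutoff (Λ : ℕ) (g : ℕ → ℝ) : ℕ :=
  if h : ∃ l, (1 ≤ l ∧ l < Λ) ∧ 2 * ((2:ℝ) ^ l)⁻¹ < |g l - g (l + 1)| then Nat.find h else Λ

open Classical in
/-- `lamOf Λ δ` is `Λ+1` if `δ ≤ 2^{-Λ}`, and otherwise the smallest `λ` with `δ > 2^{-λ}`. -/
noncomputable def lamOf (Λ : ℕ) (δ : ℝ) : ℕ :=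
  if δ ≤ ((2:ℝ) ^ Λ)⁻¹ then Λ + 1
  else if h : ∃ l, ((2:ℝ) ^ l)⁻¹ < δ then Nat.find h else Λ + 1

lemma inv_two_pow_anti {m n : ℕ} (h : m ≤ n) : ((2:ℝ) ^ n)⁻¹ ≤ ((2:ℝ) ^ m)⁻¹ :=
  inv_pow_le_inv_pow_of_le one_le_two h

lemma inv_two_pow_succ (n : ℕ) : ((2:ℝ) ^ (n + 1))⁻¹ = ((2:ℝ) ^ n)⁻¹ / 2 := by
  rw [pow_succ, mul_inv, div_eq_mul_inv]

lemma abs_sub_le_of_abs_sub_succ_le (g : ℕ → ℝ) {l m : ℕ} (hlm : l ≤ m)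
    (hstep : ∀ j, l ≤ j → j < m → |g j - g (j + 1)| ≤ 2 * ((2:ℝ) ^ j)⁻¹) :
    |g l - g m| ≤ 4 * ((2:ℝ) ^ l)⁻¹ - 4 * ((2:ℝ) ^ m)⁻¹ := by
  induction m, hlm using Nat.le_induction with
  | base => simp
  | succ m hlm ih =>
    have hm := hstep m hlm (Nat.lt_succ_self m)
    have ih := ih fun j hj hjm => hstep j hj (hjm.trans (Nat.lt_succ_self m))
    have := abs_sub_le (g l) (g m) (g (m + 1))
    rw [inv_two_pow_succ]
    linarith

section Cutoff

variable {Λ : ℕ} {g : ℕ → ℝ}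

lemma cutoff_le : cutoff Λ g ≤ Λ := by
  unfold cutoff
  split
  · next h => exact (Nat.find_spec h).1.2.le
  · exact le_rfl

lemma one_le_cutoff (hΛ : 1 ≤ Λ) : 1 ≤ cutoff Λ g := by
  unfold cutoff
  split
  · next h => exact (Nat.find_spec h).1.1
  · exact hΛ

lemma abs_sub_succ_le_of_lt_cutoff {j : ℕ} (hj : 1 ≤ j) (hjc : j < cutoff Λ g) :
    |g j - g (j + 1)| ≤ 2 * ((2:ℝ) ^ j)⁻¹ := by
  have hjΛ : j < Λ := hjc.trans_le cutoff_le
  unfold cutoff at hjc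
  split at hjc
  · next h => exact not_lt.mp fun hlt => Nat.find_min h hjc ⟨⟨hj, hjΛ⟩, hlt⟩
  · next h => exact not_lt.mp fun hlt => h ⟨j, ⟨hj, hjΛ⟩, hlt⟩

lemma two_mul_inv_two_pow_lt_abs_sub_of_cutoff_lt (hc : cutoff Λ g < Λ) :
    2 * ((2:ℝ) ^ cutoff Λ g)⁻¹ < |g (cutoff Λ g) - g (cutoff Λ g + 1)| := by
  unfold cutoff at hc ⊢
  split
  · next h => exact (Nat.find_spec h).2
  · next h => rw [dif_neg h] at hc; exact absurd hc (lt_irrefl Λ)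

lemma abs_sub_cutoff_le {l : ℕ} (hl : 1 ≤ l) (hlc : l ≤ cutoff Λ g) :
    |g l - g (cutoff Λ g)| ≤ 4 * ((2:ℝ) ^ l)⁻¹ - 4 * ((2:ℝ) ^ cutoff Λ g)⁻¹ :=
  abs_sub_le_of_abs_sub_succ_le g hlc fun _ hlj hjc =>
    abs_sub_succ_le_of_lt_cutoff (hl.trans hlj) hjc

lemma inv_two_pow_lt_abs_sub_succ_cutoff (hc : cutoff Λ g < Λ) {y : ℝ}
    (hy : |y - g (cutoff Λ g)| ≤ ((2:ℝ) ^ cutoff Λ g)⁻¹) :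
    ((2:ℝ) ^ (cutoff Λ g + 1))⁻¹ < |g (cutoff Λ g + 1) - y| := by
  have hjump := two_mul_inv_two_pow_lt_abs_sub_of_cutoff_lt hc
  have htri := abs_sub_le (g (cutoff Λ g)) y (g (cutoff Λ g + 1))
  have hpos : (0:ℝ) < ((2:ℝ) ^ cutoff Λ g)⁻¹ := by positivity
  rw [abs_sub_comm (g (cutoff Λ g)) y, abs_sub_comm y (g (cutoff Λ g + 1))] at htri
  rw [inv_two_pow_succ]
  linarith

lemma inv_two_pow_lt_abs_sub_of_le_cutoff {l : ℕ} (hl : 1 ≤ l) (hlc : l ≤ cutoff Λ g) {y : ℝ}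
    (hy : 5 * ((2:ℝ) ^ l)⁻¹ < |y - g (cutoff Λ g)|) :
    ((2:ℝ) ^ l)⁻¹ < |g l - y| := by
  have htel := abs_sub_cutoff_le (g := g) hl hlc
  have htri := abs_sub_le y (g l) (g (cutoff Λ g))
  have hpos : (0:ℝ) < ((2:ℝ) ^ cutoff Λ g)⁻¹ := by positivity
  rw [abs_sub_comm y (g l)] at htri
  linarith

end Cutoff

section LamOf

variable {Λ : ℕ} {δ : ℝ}

lemma lamOf_le_iff : lamOf Λ δ ≤ Λ ↔ ((2:ℝ) ^ Λ)⁻¹ < δ := by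
  refine ⟨fun h => not_le.mp fun hsmall => ?_, fun hδ => ?_⟩
  · rw [lamOf, if_pos hsmall] at h
    omega
  · have hex : ∃ l, ((2:ℝ) ^ l)⁻¹ < δ := ⟨Λ, hδ⟩
    rw [lamOf, if_neg hδ.not_ge, dif_pos hex]
    exact Nat.find_min' hex hδ

lemma inv_two_pow_lamOf_lt (hδ : ((2:ℝ) ^ Λ)⁻¹ < δ) : ((2:ℝ) ^ lamOf Λ δ)⁻¹ < δ := by
  have hex : ∃ l, ((2:ℝ) ^ l)⁻¹ < δ := ⟨Λ, hδ⟩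
  rw [lamOf, if_neg hδ.not_ge, dif_pos hex]
  exact Nat.find_spec hex

lemma le_inv_two_pow_of_lt_lamOf (hδ : ((2:ℝ) ^ Λ)⁻¹ < δ) {m : ℕ} (hm : m < lamOf Λ δ) :
    δ ≤ ((2:ℝ) ^ m)⁻¹ := by
  have hex : ∃ l, ((2:ℝ) ^ l)⁻¹ < δ := ⟨Λ, hδ⟩
  rw [lamOf, if_neg hδ.not_ge, dif_pos hex] at hm
  exact not_lt.mp (Nat.find_min hex hm)

lemma le_two_mul_inv_two_pow_lamOf (hδ : δ ≤ 1) : δ ≤ 2 * ((2:ℝ) ^ lamOf Λ δ)⁻¹ := by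
  by_cases hsmall : δ ≤ ((2:ℝ) ^ Λ)⁻¹
  · rw [lamOf, if_pos hsmall, inv_two_pow_succ]
    linarith
  · have hlt := lt_of_not_ge hsmall
    have hpos : lamOf Λ δ ≠ 0 := fun h0 => by
      simpa [h0] using (inv_two_pow_lamOf_lt hlt).trans_le hδ
    obtain ⟨m, hm⟩ := Nat.exists_eq_succ_of_ne_zero hpos
    have := le_inv_two_pow_of_lt_lamOf hlt (hm ▸ Nat.lt_succ_self m)
    rw [hm, inv_two_pow_succ]
    linarith

end LamOf

lemma exists_inv_two_pow_lt_abs_sub_of_lamOf_le_cutoff {Λ : ℕ} {g : ℕ → ℝ} {y : ℝ}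
    (hlam : lamOf Λ |y - g (cutoff Λ g)| ≤ cutoff Λ g)
    (hδ : |y - g (cutoff Λ g)| ≤ 2 * ((2:ℝ) ^ lamOf Λ |y - g (cutoff Λ g)|)⁻¹) :
    ∃ l, lamOf Λ |y - g (cutoff Λ g)| ≤ l ∧ l ≤ cutoff Λ g ∧
      ((2:ℝ) ^ l)⁻¹ < |g l - y| ∧ |y - g (cutoff Λ g)| / 16 ≤ ((2:ℝ) ^ l)⁻¹ := by
  set c := cutoff Λ g
  set δ := |y - g c|
  set lam := lamOf Λ δ
  have hlamδ : ((2:ℝ) ^ lam)⁻¹ < δ :=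
    inv_two_pow_lamOf_lt (lamOf_le_iff.mp (hlam.trans cutoff_le))
  have hlam3 : ((2:ℝ) ^ (lam + 3))⁻¹ = ((2:ℝ) ^ lam)⁻¹ / 8 := by
    rw [inv_two_pow_succ, inv_two_pow_succ, inv_two_pow_succ]
    ring
  rcases le_or_gt c (lam + 3) with hc3 | hc3
  · refine ⟨c, hlam, le_rfl, ?_, ?_⟩
    · rw [abs_sub_comm]
      exact (inv_two_pow_anti hlam).trans_lt hlamδ
    · linarith [inv_two_pow_anti hc3]
  · refine ⟨lam + 3, by omega, hc3.le,
      inv_two_pow_lt_abs_sub_of_le_cutoff (by omega) hc3.le ?_, by linarith⟩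
    rw [hlam3]
    linarith

/-- abstract form of Lemma real-pot-dec: for `g_1,…,g_Λ ∈ [0,1]` with
cutoff point `λ̄ = cutoff Λ g` and `y ∈ [0,1]`, setting `δ := |y − g_{λ̄}|` and
`λ := lamOf Λ δ`, either `δ ≤ 2^{-Λ}` and `λ̄ = Λ`, or there is `λ'` with
`min(λ̄+1, λ) ≤ λ' ≤ min(λ̄+1, Λ)` such that `|g_{λ'} − y| > 2^{-λ'} ≥ δ/16`. -/
theorem stmt14 (Λ : ℕ) (hΛ : 1 ≤ Λ) (g : ℕ → ℝ)
    (hg : ∀ l, 1 ≤ l → l ≤ Λ → g l ∈ Set.Icc (0:ℝ) 1)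
    (y : ℝ) (hy : y ∈ Set.Icc (0:ℝ) 1) :
    (|y - g (cutoff Λ g)| ≤ ((2:ℝ) ^ Λ)⁻¹ ∧ cutoff Λ g = Λ) ∨
    ∃ l : ℕ, min (cutoff Λ g + 1) (lamOf Λ |y - g (cutoff Λ g)|) ≤ l ∧
      l ≤ min (cutoff Λ g + 1) Λ ∧
      ((2:ℝ) ^ l)⁻¹ < |g l - y| ∧ |y - g (cutoff Λ g)| / 16 ≤ ((2:ℝ) ^ l)⁻¹ := by
  set c := cutoff Λ g
  set δ := |y - g c|
  have hc1 : 1 ≤ c := one_le_cutoff hΛ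
  have hcΛ : c ≤ Λ := cutoff_le
  have hδ1 : δ ≤ 1 := by
    simpa only [Real.dist_eq] using Real.dist_le_of_mem_Icc_01 hy (hg c hc1 hcΛ)
  have hδlam := le_two_mul_inv_two_pow_lamOf (Λ := Λ) hδ1
  rcases le_or_gt (c + 1) (lamOf Λ δ) with hclam | hlamc
  · rcases hcΛ.eq_or_lt with hcΛ | hcΛ
    · refine .inl ⟨not_lt.mp fun hδΛ => ?_, hcΛ⟩
      have := lamOf_le_iff.mpr hδΛ
      omega
    · have hδc : δ ≤ ((2:ℝ) ^ c)⁻¹ := by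
        have := inv_two_pow_anti hclam
        rw [inv_two_pow_succ] at this
        linarith
      refine .inr ⟨c + 1, min_le_left _ _, le_min le_rfl hcΛ,
        inv_two_pow_lt_abs_sub_succ_cutoff hcΛ hδc, ?_⟩
      rw [inv_two_pow_succ]
      linarith [abs_nonneg (y - g c)]
  · obtain ⟨l, hlaml, hlc, hfar, hδl⟩ :=
      exists_inv_two_pow_lt_abs_sub_of_lamOf_le_cutoff (Nat.lt_succ_iff.mp hlamc) hδlam
    exact .inr ⟨l, (min_le_right _ _).trans hlaml, le_min (hlc.trans c.le_succ) (hlc.trans hcΛ),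
      hfar, hδl⟩
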